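/- In the Attacker-Defender game with equal endowments R, Defender's expected equilibrium conflict investment conditional on Attacker winning, respectively losing, satisfies lim_{R→∞} E(d|W)/R = 3 − e and lim_{R→∞} E(d|L)/R = 1 − 1/(e−1), where E(d|W) = (Σ_{i>j} a*_i d*_j · j)/P(W) and E(d|L) = (Σ_{i≤j} a*_i d*_j · j)/(1 − P(W)). -/

import Mathlib

/-- The `n`-th harmonic number `H_n = 1 + 1/2 + ... + 1/n` (with `H_0 = 0`). -/
noncomputable def H (n : ℕ) : ℝ := ∑ k ∈ Finset.Icc 1 n, (1 : ℝ) / k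

/-- `l` is the upper bound `l*` for endowment `R`:
the unique `1 ≤ l ≤ R - 1` with `H_R - H_{R-l} < 1 < H_R - H_{R-l-1}`. -/
def IsUpperBound (R l : ℕ) : Prop :=
  1 ≤ l ∧ l ≤ R - 1 ∧ H R - H (R - l) < 1 ∧ 1 < H R - H (R - l - 1)

/-- Attacker's equilibrium mixed strategy (defender endowment `R`, upper bound `l`). -/
noncomputable def astar (R l : ℕ) : ℕ → ℝ := fun i =>
  if i = 0 then ((R : ℝ) - l) / R
  else if i ≤ l then ((R : ℝ) - l) / (((R : ℝ) - i + 1) * ((R : ℝ) - i))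
  else 0

/-- Defender's equilibrium mixed strategy (defender endowment `R`, upper bound `l`). -/
noncomputable def dstar (R l : ℕ) : ℕ → ℝ := fun j =>
  if j < l then 1 / ((R : ℝ) - j)
  else if j = l then 1 - ∑ k ∈ Finset.range l, 1 / ((R : ℝ) - k)
  else 0

/-- The probability that Attacker wins (i.e. that `i > j`). -/
noncomputable def PW (RA RD : ℕ) (a d : ℕ → ℝ) : ℝ :=
  ∑ i ∈ Finset.range (RA + 1), ∑ j ∈ Finset.range (RD + 1), if j < i then a i * d j else 0

/-- Defender's expected investment conditional on Attacker winning. -/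
noncomputable def EdW (RA RD : ℕ) (a d : ℕ → ℝ) : ℝ :=
  (∑ i ∈ Finset.range (RA + 1), ∑ j ∈ Finset.range (RD + 1),
      if j < i then a i * d j * j else 0) / PW RA RD a d

/-- Defender's expected investment conditional on Attacker losing. -/
noncomputable def EdL (RA RD : ℕ) (a d : ℕ → ℝ) : ℝ :=
  (∑ i ∈ Finset.range (RA + 1), ∑ j ∈ Finset.range (RD + 1),
      if i ≤ j then a i * d j * j else 0) / (1 - PW RA RD a d)

/-! Summing first over Attacker's investment, the probability that `a*` beats a fixed `j ≤ l`
telescopes to `1 - (R - l)/(R - j)`, so `P(W)` and both conditional expectations are rational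
expressions in `A = H_R - H_{R-l} = ∑_{j<l} 1/(R-j)`, `Q = ∑_{j<l} 1/(R-j)²` and `(R - l)/R`.
Comparing `1/x` with differences of `log` and `1/x²` with differences of `1/x` gives
`log ((R+1)/(R-l+1)) ≤ A ≤ log (R/(R-l))` and `1/(R-l+1) - 1/(R+1) ≤ Q ≤ 1/(R-l) - 1/R`.
Together with `1 - 1/(R-l) < A < 1`, which is the definition of `l*`, this forces `A → 1`,
`(R - l)/R → 1/e` and `(R - l) Q → 1 - 1/e`, hence `P(W) → 1/e`. -/

open Finset Filter Real Topology

lemma log_add_one_sub_log_le_one_div {x : ℝ} (hx : 0 < x) : log (x + 1) - log x ≤ 1 / x := by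
  have h := log_le_sub_one_of_pos (show 0 < (x + 1) / x by positivity)
  rw [log_div (by positivity) hx.ne'] at h
  calc log (x + 1) - log x ≤ (x + 1) / x - 1 := h
    _ = 1 / x := by field_simp; ring

lemma one_div_le_log_sub_log_sub_one {x : ℝ} (hx : 1 < x) : 1 / x ≤ log x - log (x - 1) := by
  have h := one_sub_inv_le_log_of_pos (show 0 < x / (x - 1) by
    have : 0 < x - 1 := by linarith
    positivity)
  rw [log_div (by positivity) (by linarith)] at h
  calc 1 / x = 1 - (x / (x - 1))⁻¹ := by field_simp; ring
    _ ≤ log x - log (x - 1) := h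

lemma one_div_sub_one_div_add_one_le_one_div_sq {x : ℝ} (hx : 0 < x) :
    1 / x - 1 / (x + 1) ≤ 1 / x ^ 2 := by
  rw [div_sub_div _ _ hx.ne' (by positivity), div_le_div_iff₀ (by positivity) (by positivity)]
  nlinarith

lemma one_div_sq_le_one_div_sub_one_sub_one_div {x : ℝ} (hx : 1 < x) :
    1 / x ^ 2 ≤ 1 / (x - 1) - 1 / x := by
  have : 0 < x - 1 := by linarith
  rw [div_sub_div _ _ this.ne' (by positivity), div_le_div_iff₀ (by positivity) (by positivity)]
  nlinarith

noncomputable def harmonicTail (R l : ℕ) : ℝ := ∑ j ∈ range l, 1 / ((R : ℝ) - j)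

noncomputable def harmonicSqTail (R l : ℕ) : ℝ := ∑ j ∈ range l, 1 / ((R : ℝ) - j) ^ 2

lemma H_succ (n : ℕ) : H (n + 1) = H n + 1 / (n + 1 : ℕ) :=
  sum_Icc_succ_top (Nat.le_add_left 1 n) _

lemma H_sub_H_sub_eq_harmonicTail (R : ℕ) {l : ℕ} (hl : l ≤ R) :
    H R - H (R - l) = harmonicTail R l := by
  induction l with
  | zero => simp [harmonicTail]
  | succ l ih =>
    have hsplit : R - l = R - (l + 1) + 1 := by omega
    rw [harmonicTail, sum_range_succ, ← harmonicTail, ← ih (by omega), hsplit, H_succ, ← hsplit,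
      Nat.cast_sub (by omega : l ≤ R)]
    ring

lemma sum_range_le_sub_of_le {f g : ℕ → ℝ} {n : ℕ} (h : ∀ i < n, f i ≤ g i - g (i + 1)) :
    ∑ i ∈ range n, f i ≤ g 0 - g n :=
  (sum_le_sum fun i hi => h i (mem_range.1 hi)).trans_eq (sum_range_sub' g n)

lemma sub_le_sum_range_of_le {f g : ℕ → ℝ} {n : ℕ} (h : ∀ i < n, g i - g (i + 1) ≤ f i) :
    g 0 - g n ≤ ∑ i ∈ range n, f i :=
  (sum_range_sub' g n).symm.trans_le (sum_le_sum fun i hi => h i (mem_range.1 hi))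

section Bounds

variable {R l : ℕ}

lemma log_div_le_harmonicTail (hl : l ≤ R) :
    log ((R + 1) / ((R : ℝ) - l + 1)) ≤ harmonicTail R l := by
  have hlR : (l : ℝ) ≤ R := by exact_mod_cast hl
  rw [log_div (by positivity) (by linarith)]
  have key := sub_le_sum_range_of_le (f := fun j => 1 / ((R : ℝ) - j))
    (g := fun j => log ((R : ℝ) - j + 1)) (n := l) fun j hj => by
      have hj : (j : ℝ) + 1 ≤ R := by exact_mod_cast (by omega : j + 1 ≤ R)
      simpa [sub_add_eq_sub_sub] using
        log_add_one_sub_log_le_one_div (by linarith : (0 : ℝ) < R - j)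
  simpa [harmonicTail] using key

lemma harmonicTail_le_log_div (hl : l < R) :
    harmonicTail R l ≤ log (R / ((R : ℝ) - l)) := by
  have hlR : (l : ℝ) + 1 ≤ R := by exact_mod_cast hl
  rw [log_div (by linarith) (by linarith)]
  have key := sum_range_le_sub_of_le (f := fun j => 1 / ((R : ℝ) - j))
    (g := fun j => log ((R : ℝ) - j)) (n := l) fun j hj => by
      have hj : (j : ℝ) + 1 ≤ l := by exact_mod_cast hj
      simpa [sub_add_eq_sub_sub] using
        one_div_le_log_sub_log_sub_one (by linarith : (1 : ℝ) < R - j)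
  simpa [harmonicTail] using key

lemma one_div_sub_le_harmonicSqTail (hl : l ≤ R) :
    1 / ((R : ℝ) - l + 1) - 1 / (R + 1) ≤ harmonicSqTail R l := by
  have key := sub_le_sum_range_of_le (f := fun j => 1 / ((R : ℝ) - j) ^ 2)
    (g := fun j => -(1 / ((R : ℝ) - j + 1))) (n := l) fun j hj => by
      have hj : (j : ℝ) + 1 ≤ R := by exact_mod_cast (by omega : j + 1 ≤ R)
      have := one_div_sub_one_div_add_one_le_one_div_sq (by linarith : (0 : ℝ) < R - j)
      push_cast
      rw [sub_add_eq_sub_sub, sub_add_cancel]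
      linarith
  simpa [harmonicSqTail, neg_add_eq_sub] using key

lemma harmonicSqTail_le_one_div_sub (hl : l < R) :
    harmonicSqTail R l ≤ 1 / ((R : ℝ) - l) - 1 / R := by
  have key := sum_range_le_sub_of_le (f := fun j => 1 / ((R : ℝ) - j) ^ 2)
    (g := fun j => -(1 / ((R : ℝ) - j))) (n := l) fun j hj => by
      have hj : (j : ℝ) + 1 ≤ l := by exact_mod_cast hj
      have hlR : (l : ℝ) + 1 ≤ R := by exact_mod_cast hl
      have := one_div_sq_le_one_div_sub_one_sub_one_div (by linarith : (1 : ℝ) < R - j)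
      push_cast
      rw [sub_add_eq_sub_sub]
      linarith
  simpa [harmonicSqTail, neg_add_eq_sub] using key

end Bounds

section Game

variable {RA RD : ℕ} {a d : ℕ → ℝ}

noncomputable def tailProb (a : ℕ → ℝ) (RA j : ℕ) : ℝ :=
  ∑ i ∈ range (RA + 1), if j < i then a i else 0

lemma sum_range_eq_add_tailProb_zero : ∑ i ∈ range (RA + 1), a i = a 0 + tailProb a RA 0 := by
  simp [tailProb, sum_range_succ' _ RA, add_comm]

lemma PW_eq_sum_mul_tailProb : PW RA RD a d = ∑ j ∈ range (RD + 1), d j * tailProb a RA j := by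
  rw [PW, sum_comm]
  simp only [tailProb, mul_sum, mul_ite, mul_zero, mul_comm (d _) (a _)]

lemma EdW_eq_sum_mul_tailProb :
    EdW RA RD a d = (∑ j ∈ range (RD + 1), d j * (j * tailProb a RA j)) / PW RA RD a d := by
  rw [EdW, sum_comm]
  congr 1
  simp only [tailProb, mul_sum, mul_ite, mul_zero]
  refine sum_congr rfl fun j _ => sum_congr rfl fun i _ => by split_ifs <;> ring

lemma EdL_eq_sum_mul_tailProb :
    EdL RA RD a d = (∑ j ∈ range (RD + 1),
      d j * (j * (∑ i ∈ range (RA + 1), a i - tailProb a RA j))) / (1 - PW RA RD a d) := by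
  rw [EdL, sum_comm]
  congr 1
  simp only [tailProb, ← sum_sub_distrib, mul_sum]
  refine sum_congr rfl fun j _ => sum_congr rfl fun i _ => ?_
  by_cases h : i ≤ j
  · simp [h, not_lt.2 h]; ring
  · simp [h, not_le.1 h]

end Game

section Equilibrium

variable {R l : ℕ}

lemma astar_succ (hl : l < R) {i : ℕ} (hi : i < l) :
    astar R l (i + 1) = ((R : ℝ) - l) * (1 / ((R : ℝ) - (i + 1 : ℕ)) - 1 / ((R : ℝ) - i)) := by
  have hi' : (i : ℝ) + 1 + 1 ≤ R := by exact_mod_cast (by omega : i + 2 ≤ R)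
  rw [astar, if_neg i.succ_ne_zero, if_pos (by omega : i + 1 ≤ l)]
  push_cast
  rw [show (R : ℝ) - (i + 1) + 1 = R - i by ring]
  field_simp [show (R : ℝ) - (i + 1) ≠ 0 by linarith, show (R : ℝ) - i ≠ 0 by linarith]
  ring

lemma tailProb_astar (hl : l < R) {j : ℕ} (hj : j ≤ l) :
    tailProb (astar R l) R j = 1 - ((R : ℝ) - l) / ((R : ℝ) - j) := by
  have hlR : (l : ℝ) + 1 ≤ R := by exact_mod_cast hl
  have hsupp : ∑ i ∈ range R, (if j < i + 1 then astar R l (i + 1) else 0)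
      = ∑ i ∈ Ico j l, astar R l (i + 1) := by
    rw [← sum_subset (fun i hi => ?_) fun i _ hi => ?_]
    · exact sum_congr rfl fun i hi => if_pos (by simp only [mem_Ico] at hi; omega)
    · simp only [mem_Ico, mem_range] at hi ⊢; omega
    · simp only [mem_Ico, not_and_or, not_le, not_lt] at hi
      rcases hi with hi | hi
      · exact if_neg (by omega)
      · simp [astar, show ¬ i + 1 ≤ l by omega]
  rw [tailProb, sum_range_succ', hsupp, sum_congr rfl fun i hi => astar_succ hl (mem_Ico.1 hi).2,
    ← mul_sum, sum_Ico_sub (fun i : ℕ => 1 / ((R : ℝ) - i)) hj]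
  field_simp [show (R : ℝ) - l ≠ 0 by linarith]
  simp

lemma sum_range_astar (hl : l < R) : ∑ i ∈ range (R + 1), astar R l i = 1 := by
  have hR : (R : ℝ) ≠ 0 := Nat.cast_ne_zero.2 (by omega)
  rw [sum_range_eq_add_tailProb_zero, tailProb_astar hl l.zero_le]
  simp [astar]

lemma sum_dstar_mul (hl : l ≤ R) (F : ℕ → ℝ) :
    ∑ j ∈ range (R + 1), dstar R l j * F j
      = ∑ j ∈ range l, 1 / ((R : ℝ) - j) * F j + (1 - harmonicTail R l) * F l := by
  rw [← sum_subset (range_subset_range.2 (by omega : l + 1 ≤ R + 1)) fun j _ hj => ?_,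
    sum_range_succ]
  · congr 1
    · exact sum_congr rfl fun j hj => by rw [dstar, if_pos (mem_range.1 hj)]
    · simp [dstar, harmonicTail]
  · simp [dstar, show ¬ j < l by simp at hj; omega, show j ≠ l by simp at hj; omega]

lemma PW_astar_dstar (hl : l < R) :
    PW R R (astar R l) (dstar R l) = harmonicTail R l - ((R : ℝ) - l) * harmonicSqTail R l := by
  have hlR : (l : ℝ) + 1 ≤ R := by exact_mod_cast hl
  rw [PW_eq_sum_mul_tailProb, sum_dstar_mul hl.le, tailProb_astar hl le_rfl,
    sum_congr rfl fun j hj => by rw [tailProb_astar hl (mem_range.1 hj).le],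
    harmonicTail, harmonicSqTail, mul_sum, ← sum_sub_distrib]
  have hj : ∀ j ∈ range l, (R : ℝ) - j ≠ 0 := fun j hj => by
    have : (j : ℝ) + 1 ≤ l := by exact_mod_cast mem_range.1 hj
    linarith
  rw [div_self (by linarith), sub_self, mul_zero, add_zero]
  exact sum_congr rfl fun j hj' => by field_simp [hj j hj']

lemma EdW_astar_dstar_div (hl : l < R) :
    EdW R R (astar R l) (dstar R l) / R =
      (harmonicTail R l - ((R : ℝ) - l) * harmonicSqTail R l - 1 + ((R : ℝ) - l) / R
        + ((R : ℝ) - l) / R * harmonicTail R l)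
      / (harmonicTail R l - ((R : ℝ) - l) * harmonicSqTail R l) := by
  have hlR : (l : ℝ) + 1 ≤ R := by exact_mod_cast hl
  have hnum : ∑ j ∈ range (R + 1), dstar R l j * (j * tailProb (astar R l) R j)
      = (R + (R - l)) * harmonicTail R l - (R - l) * R * harmonicSqTail R l - l := by
    rw [sum_dstar_mul hl.le, tailProb_astar hl le_rfl,
      sum_congr rfl fun j hj => by rw [tailProb_astar hl (mem_range.1 hj).le],
      div_self (by linarith), sub_self, mul_zero, mul_zero, add_zero]
    have hterm : ∀ j ∈ range l, 1 / ((R : ℝ) - j) * (j * (1 - (R - l) / (R - j)))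
        = (R + (R - l)) * (1 / ((R : ℝ) - j)) - (R - l) * R * (1 / ((R : ℝ) - j) ^ 2) - 1 :=
      fun j hj => by
        have : (j : ℝ) + 1 ≤ l := by exact_mod_cast mem_range.1 hj
        field_simp [show (R : ℝ) - j ≠ 0 by linarith]
        ring
    simp only [sum_congr rfl hterm, sum_sub_distrib, ← mul_sum, sum_const, card_range,
      nsmul_eq_mul, mul_one, harmonicTail, harmonicSqTail]
  rw [EdW_eq_sum_mul_tailProb, hnum, PW_astar_dstar hl, div_right_comm]
  congr 1
  field_simp [show (R : ℝ) ≠ 0 by linarith]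
  ring

lemma EdL_astar_dstar_div (hl : l < R) :
    EdL R R (astar R l) (dstar R l) / R =
      (((R : ℝ) - l) * harmonicSqTail R l - harmonicTail R l + 1 - ((R : ℝ) - l) / R)
      / (1 - (harmonicTail R l - ((R : ℝ) - l) * harmonicSqTail R l)) := by
  have hlR : (l : ℝ) + 1 ≤ R := by exact_mod_cast hl
  have hnum : ∑ j ∈ range (R + 1), dstar R l j *
        (j * (∑ i ∈ range (R + 1), astar R l i - tailProb (astar R l) R j))
      = (R - l) * R * harmonicSqTail R l - (R - l) * harmonicTail R l
        + (1 - harmonicTail R l) * l := by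
    rw [sum_range_astar hl, sum_dstar_mul hl.le, tailProb_astar hl le_rfl,
      sum_congr rfl fun j hj => by rw [tailProb_astar hl (mem_range.1 hj).le],
      div_self (by linarith), sub_self, sub_zero, mul_one]
    have hterm : ∀ j ∈ range l, 1 / ((R : ℝ) - j) * (j * (1 - (1 - (R - l) / (R - j))))
        = (R - l) * R * (1 / ((R : ℝ) - j) ^ 2) - (R - l) * (1 / ((R : ℝ) - j)) :=
      fun j hj => by
        have : (j : ℝ) + 1 ≤ l := by exact_mod_cast mem_range.1 hj
        field_simp [show (R : ℝ) - j ≠ 0 by linarith]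
        ring
    simp only [sum_congr rfl hterm, sum_sub_distrib, ← mul_sum, harmonicTail, harmonicSqTail]
  rw [EdL_eq_sum_mul_tailProb, hnum, PW_astar_dstar hl, div_right_comm]
  congr 1
  field_simp [show (R : ℝ) ≠ 0 by linarith]
  ring

end Equilibrium

namespace IsUpperBound

variable {R l : ℕ}

lemma lt (h : IsUpperBound R l) : l < R := by
  -- `1 ≤ l` excludes `R = 0`, where `l ≤ R - 1` would hold by truncation.
  obtain ⟨h1, h2, -, -⟩ := h
  omega

lemma harmonicTail_lt_one (h : IsUpperBound R l) : harmonicTail R l < 1 :=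
  H_sub_H_sub_eq_harmonicTail R h.lt.le ▸ h.2.2.1

lemma one_lt_harmonicTail_add (h : IsUpperBound R l) :
    1 < harmonicTail R l + 1 / ((R : ℝ) - l) := by
  have h' := h.2.2.2
  rwa [Nat.sub_sub, H_sub_H_sub_eq_harmonicTail R h.lt, harmonicTail, sum_range_succ] at h'

lemma log_div_mem_Ioo (h : IsUpperBound R l) :
    log (R / ((R : ℝ) - l)) ∈ Set.Ioo (1 - 1 / ((R : ℝ) - l)) (1 + 1 / ((R : ℝ) - l)) := by
  have hlR : (l : ℝ) + 1 ≤ R := by exact_mod_cast h.lt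
  refine ⟨by linarith [h.one_lt_harmonicTail_add, harmonicTail_le_log_div h.lt], ?_⟩
  have hlog := (log_div_le_harmonicTail h.lt.le).trans_lt h.harmonicTail_lt_one
  rw [log_div (by linarith) (by linarith)] at hlog ⊢
  have hR : log R ≤ log (R + 1) := log_le_log (by linarith) (by linarith)
  linarith [log_add_one_sub_log_le_one_div (by linarith : (0 : ℝ) < R - l)]

end IsUpperBound

section Asymptotics

variable {L : ℕ → ℕ}

lemma tendsto_sub_atTop_of_isUpperBound (hL : ∀ᶠ R in atTop, IsUpperBound R (L R)) :
    Tendsto (fun R : ℕ => (R : ℝ) - L R) atTop atTop := by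
  refine tendsto_atTop_mono' _ (hL.mono fun R h => ?_)
    (tendsto_atTop_add_const_right _ (-1)
      ((tendsto_natCast_atTop_atTop (R := ℝ)).atTop_div_const (exp_pos 1)))
  have hlR : (L R : ℝ) + 1 ≤ R := by exact_mod_cast h.lt
  have hlog := (log_div_le_harmonicTail h.lt.le).trans_lt h.harmonicTail_lt_one
  rw [log_lt_iff_lt_exp (div_pos (by positivity) (by linarith)), div_lt_iff₀ (by linarith)] at hlog
  rw [div_add' _ _ _ (exp_pos 1).ne', div_le_iff₀ (exp_pos 1)]
  nlinarith [exp_pos 1]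

lemma tendsto_one_div_sub_of_isUpperBound (hL : ∀ᶠ R in atTop, IsUpperBound R (L R)) :
    Tendsto (fun R : ℕ => 1 / ((R : ℝ) - L R)) atTop (𝓝 0) := by
  simpa only [one_div, Pi.inv_def] using (tendsto_sub_atTop_of_isUpperBound hL).inv_tendsto_atTop

lemma tendsto_harmonicTail_of_isUpperBound (hL : ∀ᶠ R in atTop, IsUpperBound R (L R)) :
    Tendsto (fun R => harmonicTail R (L R)) atTop (𝓝 1) := by
  refine tendsto_of_tendsto_of_tendsto_of_le_of_le' (g := fun R : ℕ => 1 - 1 / ((R : ℝ) - L R))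
    (by simpa using (tendsto_one_div_sub_of_isUpperBound hL).const_sub 1) tendsto_const_nhds
    (hL.mono fun R h => ?_) (hL.mono fun R h => h.harmonicTail_lt_one.le)
  linarith [h.one_lt_harmonicTail_add]

lemma tendsto_sub_div_of_isUpperBound (hL : ∀ᶠ R in atTop, IsUpperBound R (L R)) :
    Tendsto (fun R : ℕ => ((R : ℝ) - L R) / R) atTop (𝓝 (exp 1)⁻¹) := by
  have hlog : Tendsto (fun R : ℕ => log (R / ((R : ℝ) - L R))) atTop (𝓝 1) :=
    tendsto_of_tendsto_of_tendsto_of_le_of_le'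
      (by simpa using (tendsto_one_div_sub_of_isUpperBound hL).const_sub 1)
      (by simpa using (tendsto_one_div_sub_of_isUpperBound hL).const_add 1)
      (hL.mono fun R h => h.log_div_mem_Ioo.1.le) (hL.mono fun R h => h.log_div_mem_Ioo.2.le)
  refine (((continuous_exp.tendsto 1).comp hlog).inv₀ (exp_pos 1).ne').congr'
    (hL.mono fun R h => ?_)
  have hlR : (L R : ℝ) + 1 ≤ R := by exact_mod_cast h.lt
  simp only [Function.comp_apply]
  rw [exp_log (div_pos (by linarith) (by linarith)), inv_div]

lemma tendsto_mul_harmonicSqTail_of_isUpperBound (hL : ∀ᶠ R in atTop, IsUpperBound R (L R)) :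
    Tendsto (fun R : ℕ => ((R : ℝ) - L R) * harmonicSqTail R (L R)) atTop (𝓝 (1 - (exp 1)⁻¹)) := by
  have hu := tendsto_sub_div_of_isUpperBound hL
  have hv : Tendsto (fun R : ℕ => 1 / ((R : ℝ) - L R + 1)) atTop (𝓝 0) := by
    simpa only [one_div, Pi.inv_def] using
      (tendsto_atTop_add_const_right _ 1 (tendsto_sub_atTop_of_isUpperBound hL)).inv_tendsto_atTop
  refine tendsto_of_tendsto_of_tendsto_of_le_of_le'
    (g := fun R : ℕ => 1 - 1 / ((R : ℝ) - L R + 1) - ((R : ℝ) - L R) / R)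
    (h := fun R : ℕ => 1 - ((R : ℝ) - L R) / R)
    (by simpa using (hv.const_sub 1).sub hu) (hu.const_sub 1)
    (hL.mono fun R h => ?_) (hL.mono fun R h => ?_)
  · have hlR : (L R : ℝ) + 1 ≤ R := by exact_mod_cast h.lt
    have hμ : (0 : ℝ) < R - L R := by linarith
    have hQ := mul_le_mul_of_nonneg_left (one_div_sub_le_harmonicSqTail h.lt.le) hμ.le
    have hR : ((R : ℝ) - L R) / (R + 1) ≤ ((R : ℝ) - L R) / R :=
      div_le_div_of_nonneg_left hμ.le (by linarith) (by linarith)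
    have heq : ((R : ℝ) - L R) * (1 / (R - L R + 1) - 1 / (R + 1))
        = 1 - 1 / ((R : ℝ) - L R + 1) - ((R : ℝ) - L R) / (R + 1) := by
      field_simp
      ring
    linarith
  · have hlR : (L R : ℝ) + 1 ≤ R := by exact_mod_cast h.lt
    have hμ : (0 : ℝ) < R - L R := by linarith
    have hQ := mul_le_mul_of_nonneg_left (harmonicSqTail_le_one_div_sub h.lt) hμ.le
    have heq : ((R : ℝ) - L R) * (1 / (R - L R) - 1 / R) = 1 - ((R : ℝ) - L R) / R := by
      field_simp
    linarith

end Asymptotics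

/-- Defender's conditional expected investments, as shares of the endowment, converge to
`3 - e` (given Attacker wins) and `1 - 1/(e-1)` (given Attacker loses). -/
theorem defender_conditional_investment_tendsto (L : ℕ → ℕ)
    (hL : ∀ R, 2 ≤ R → IsUpperBound R (L R)) :
    Filter.Tendsto (fun R : ℕ => EdW R R (astar R (L R)) (dstar R (L R)) / R) Filter.atTop
      (nhds (3 - Real.exp 1)) ∧
    Filter.Tendsto (fun R : ℕ => EdL R R (astar R (L R)) (dstar R (L R)) / R) Filter.atTop
      (nhds (1 - 1 / (Real.exp 1 - 1))) := by
  have hL' : ∀ᶠ R in atTop, IsUpperBound R (L R) := eventually_atTop.2 ⟨2, hL⟩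
  have hA := tendsto_harmonicTail_of_isUpperBound hL'
  have hu := tendsto_sub_div_of_isUpperBound hL'
  have hq := tendsto_mul_harmonicSqTail_of_isUpperBound hL'
  have hP := hA.sub hq
  have he1 : exp 1 - 1 ≠ 0 := sub_ne_zero.2 (one_lt_exp_iff.2 one_pos).ne'
  have he1' : 1 - (exp 1)⁻¹ ≠ 0 := by
    rw [sub_ne_zero, ne_comm, inv_ne_one]
    exact (one_lt_exp_iff.2 one_pos).ne'
  constructor
  · convert ((((hP.sub_const 1).add hu).add (hu.mul hA)).div hP (by simp)).congr'
      (hL'.mono fun R h => (EdW_astar_dstar_div h.lt).symm) using 2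
    field_simp
    ring
  · convert ((((hq.sub hA).add_const 1).sub hu).div (hP.const_sub 1) (by simpa using he1')).congr'
      (hL'.mono fun R h => (EdL_astar_dstar_div h.lt).symm) using 2
    field_simp [he1, he1']
    ring
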